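/- For every natural number n, F_{2n+2} = Σ_{j ∈ ℤ} [ C(2n+1, n-5j) - C(2n+1, n-5j-2) ]. -/

import Mathlib

/-!
Let `D_m(a) = ∑_{i ≡ a} C(m, i) - ∑_{i ≡ a - 2} C(m, i)`, congruences mod 5. Pascal's rule gives
`D_{m+1}(a) = D_m(a) + D_m(a - 1)`, i.e. `D_m` is multiplied by `1 + x` in `ℤ[x]/(x⁵ - 1)`, and the
five values of `D_m` sum to zero by periodicity. Since
`(1 + x)⁴ - 3x(1 + x)² + x² = 1 + x + x² + x³ + x⁴`, the numbers `d_n = D_{2n+1}(n)` satisfy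
`d_{n+2} = 3 d_{n+1} - d_n`, the recurrence of `F_{2n+2}`, and `d_0 = 1 = F_2`, `d_1 = 3 = F_4`.
-/

/-- Binomial coefficient `C(m, j)` with integer lower index, zero when `j < 0`. -/
def icho (m : ℕ) (j : ℤ) : ℤ := if 0 ≤ j then (m.choose j.toNat : ℤ) else 0

lemma icho_eq_zero_of_neg {m : ℕ} {j : ℤ} (h : j < 0) : icho m j = 0 :=
  if_neg (not_le.mpr h)

lemma icho_eq_zero_of_lt {m : ℕ} {j : ℤ} (h : (m : ℤ) < j) : icho m j = 0 := by
  rw [icho, if_pos (by omega), Nat.choose_eq_zero_of_lt (by omega), Nat.cast_zero]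

lemma support_icho_subset (m : ℕ) : Function.support (icho m) ⊆ Set.Icc 0 (m : ℤ) := by
  intro j hj
  by_contra hj'
  rcases not_and_or.mp hj' with h | h
  · exact hj (icho_eq_zero_of_neg (not_le.mp h))
  · exact hj (icho_eq_zero_of_lt (not_le.mp h))

lemma icho_succ (m : ℕ) (k : ℤ) : icho (m + 1) k = icho m k + icho m (k - 1) := by
  rcases k with (_ | k) | k
  · simp [icho]
  · simp [icho, Nat.choose_succ_succ', add_comm, show (0 : ℤ) ≤ k + 1 by omega]
  · simp [icho_eq_zero_of_neg, Int.negSucc_lt_zero]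

noncomputable def chooseResidueSum (k : ℤ) (m : ℕ) (a : ℤ) : ℤ := ∑ᶠ j : ℤ, icho m (a - k * j)

section chooseResidueSum

variable {k : ℤ}

lemma finite_support_icho_sub_mul (hk : k ≠ 0) (m : ℕ) (a : ℤ) :
    (Function.support fun j : ℤ => icho m (a - k * j)).Finite :=
  ((Set.finite_Icc 0 (m : ℤ)).subset (support_icho_subset m)).preimage
    fun _ _ _ _ hij => mul_left_cancel₀ hk (sub_right_injective hij)

lemma chooseResidueSum_add_period (m : ℕ) (a : ℤ) :
    chooseResidueSum k m (a + k) = chooseResidueSum k m a :=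
  (finsum_eq_of_bijective (· + 1) (Equiv.addRight 1).bijective fun j => by
    simp only [mul_add]; congr 1; ring).symm

lemma chooseResidueSum_succ (hk : k ≠ 0) (m : ℕ) (a : ℤ) :
    chooseResidueSum k (m + 1) a = chooseResidueSum k m a + chooseResidueSum k m (a - 1) := by
  rw [chooseResidueSum, chooseResidueSum, chooseResidueSum, ← finsum_add_distrib
    (finite_support_icho_sub_mul hk m a) (finite_support_icho_sub_mul hk m (a - 1))]
  exact finsum_congr fun j => by rw [icho_succ, sub_right_comm]

lemma chooseResidueSum_eq_icho {m : ℕ} {a : ℤ} (hm : m < a + k) (ha : a < k) :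
    chooseResidueSum k m a = icho m a := by
  rw [chooseResidueSum, finsum_eq_single _ 0 fun j hj => ?_, mul_zero, sub_zero]
  rcases hj.lt_or_gt with hj | hj
  · exact icho_eq_zero_of_lt (by nlinarith)
  · exact icho_eq_zero_of_neg (by nlinarith)

end chooseResidueSum

lemma pascal_add_four_eq_of_sum_five_eq_zero (g : ℕ → ℤ → ℤ)
    (hg : ∀ m a, g (m + 1) a = g m a + g m (a - 1))
    (hsum : ∀ m a, g m a + g m (a - 1) + g m (a - 2) + g m (a - 3) + g m (a - 4) = 0)
    (m : ℕ) (a : ℤ) :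
    g (m + 4) (a + 2) = 3 * g (m + 2) (a + 1) - g m a := by
  have h := hsum m (a + 2)
  simp only [hg, show a + 2 - 1 - 1 = a by ring] at h ⊢
  ring_nf at h ⊢
  linarith

lemma fib_two_mul_add_six (n : ℕ) :
    (Nat.fib (2 * n + 6) : ℤ) = 3 * Nat.fib (2 * n + 4) - Nat.fib (2 * n + 2) := by
  have h4 := Nat.fib_add_two (n := 2 * n + 2)
  have h5 := Nat.fib_add_two (n := 2 * n + 3)
  have h6 := Nat.fib_add_two (n := 2 * n + 4)
  push_cast [h4, h5, h6]
  ring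

noncomputable def chooseResidueDiff (m : ℕ) (a : ℤ) : ℤ :=
  chooseResidueSum 5 m a - chooseResidueSum 5 m (a - 2)

lemma chooseResidueDiff_succ (m : ℕ) (a : ℤ) :
    chooseResidueDiff (m + 1) a = chooseResidueDiff m a + chooseResidueDiff m (a - 1) := by
  simp only [chooseResidueDiff, chooseResidueSum_succ (by norm_num : (5 : ℤ) ≠ 0), sub_right_comm]
  ring

lemma chooseResidueDiff_sum_five (m : ℕ) (a : ℤ) :
    chooseResidueDiff m a + chooseResidueDiff m (a - 1) + chooseResidueDiff m (a - 2) +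
      chooseResidueDiff m (a - 3) + chooseResidueDiff m (a - 4) = 0 := by
  have h₀ := chooseResidueSum_add_period (k := 5) m (a - 5)
  have h₁ := chooseResidueSum_add_period (k := 5) m (a - 6)
  unfold chooseResidueDiff
  ring_nf at h₀ h₁ ⊢
  linarith

lemma fib_two_mul_add_two_eq_chooseResidueDiff (n : ℕ) :
    (Nat.fib (2 * n + 2) : ℤ) = chooseResidueDiff (2 * n + 1) n := by
  induction n using Nat.twoStepInduction with
  | zero => simp [chooseResidueDiff, chooseResidueSum_eq_icho, icho]
  | one => simp [chooseResidueDiff, chooseResidueSum_eq_icho, icho, Nat.fib_add_two]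
  | more n ih₀ ih₁ =>
    rw [show 2 * (n + 2) + 2 = 2 * n + 6 by ring, fib_two_mul_add_six, ih₀,
      show 2 * n + 4 = 2 * (n + 1) + 2 by ring, ih₁,
      show 2 * (n + 2) + 1 = 2 * n + 1 + 4 by ring, show 2 * (n + 1) + 1 = 2 * n + 1 + 2 by ring]
    push_cast
    exact (pascal_add_four_eq_of_sum_five_eq_zero _ chooseResidueDiff_succ
      chooseResidueDiff_sum_five (2 * n + 1) n).symm

/-- Identity (5): `F_{2n+2} = Σ_{j ∈ ℤ} [C(2n+1, n-5j) - C(2n+1, n-5j-2)]`. -/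
theorem fib_even_binomial_sum' (n : ℕ) :
    (Nat.fib (2 * n + 2) : ℤ) =
      ∑ᶠ j : ℤ, (icho (2 * n + 1) ((n : ℤ) - 5 * j) - icho (2 * n + 1) ((n : ℤ) - 5 * j - 2)) := by
  simp only [sub_right_comm _ (5 * _) (2 : ℤ)]
  rw [finsum_sub_distrib (finite_support_icho_sub_mul (by norm_num) _ _)
    (finite_support_icho_sub_mul (by norm_num) _ _)]
  exact fib_two_mul_add_two_eq_chooseResidueDiff n
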